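/- (Proposition 5.3 of the paper.) For every γ ∈ (0,1)∪(1,∞), the first return time τ to Y = (x*,1] satisfies μ_Y(τ > n) ∼ e_α·n^{-α} as n → ∞, where α = 1/γ and e_α = α^α·(1−γ)/(2^{1−γ}−1) > 0; precisely, n^α·μ_Y{y ∈ Y : τ(y) > n} → e_α as n → ∞. -/

import Mathlib

open Real Set MeasureTheory Filter Topology
set_option linter.unusedSectionVars false
set_option maxHeartbeats 1000000

noncomputable section

/-- The common branch formula of the Thaler map:
`g(x) = (x^(1-γ) + (1+x)^(1-γ) − 1)^(1/(1-γ))` (real powers). -/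
def thalerG (γ x : ℝ) : ℝ := (x ^ (1 - γ) + (1 + x) ^ (1 - γ) - 1) ^ (1 / (1 - γ))

/-- The Thaler map with branch point `xs`: `T 0 = 0`, `T x = g x` on `(0, xs]` and
`T x = g x − 1` on `(xs, 1]`. -/
def thalerT (γ xs : ℝ) (x : ℝ) : ℝ :=
  if x ≤ 0 then 0 else if x ≤ xs then thalerG γ x else thalerG γ x - 1

/-- The invariant density `h(x) = x^(-γ) + (x+1)^(-γ)`. -/
def thalerH (γ x : ℝ) : ℝ := x ^ (-γ) + (x + 1) ^ (-γ)

/-- The measure `μ` on `[0,1]` with density `h` with respect to Lebesgue measure. -/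
def thalerMu (γ : ℝ) : Measure ℝ :=
  (volume.restrict (Set.Icc (0 : ℝ) 1)).withDensity fun x => ENNReal.ofReal (thalerH γ x)

/-- The normalized restriction `μ_Y = μ|_Y / μ(Y)` of `μ` to `Y = (xs,1]`. -/
def thalerMuY (γ xs : ℝ) : Measure ℝ :=
  (thalerMu γ (Set.Ioc xs 1))⁻¹ • (thalerMu γ).restrict (Set.Ioc xs 1)

/-- The first return time `τ(y) = inf{n ≥ 1 : T^n y ∈ Y}` to `Y = (xs, 1]`. -/
def thalerTau (γ xs : ℝ) (y : ℝ) : ℕ :=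
  sInf {n : ℕ | 1 ≤ n ∧ (thalerT γ xs)^[n] y ∈ Set.Ioc xs 1}

section Basic
variable {γ : ℝ} (hγ0 : 0 < γ) (hγ1 : γ ≠ 1)
include hγ0 hγ1

lemma phi_pos {x : ℝ} (hx : 0 < x) (hx1 : x ≤ 1) :
    0 < x ^ (1 - γ) + (1 + x) ^ (1 - γ) - 1 := by
  rcases lt_or_gt_of_ne hγ1 with h | h
  · have hb : (0:ℝ) < 1 - γ := by linarith
    have h1 : (1:ℝ) < (1 + x) ^ (1 - γ) := by
      rw [Real.one_lt_rpow_iff_of_pos (by linarith : (0:ℝ) < 1 + x)]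
      exact Or.inl ⟨by linarith, hb⟩
    have h2 : 0 < x ^ (1 - γ) := Real.rpow_pos_of_pos hx _
    linarith
  · have h1 : (1:ℝ) ≤ x ^ (1 - γ) :=
      Real.one_le_rpow_of_pos_of_le_one_of_nonpos hx hx1 (by linarith)
    have h2 : 0 < (1 + x) ^ (1 - γ) := Real.rpow_pos_of_pos (by linarith) _
    linarith

lemma thalerG_pos {x : ℝ} (hx : 0 < x) (hx1 : x ≤ 1) : 0 < thalerG γ x :=
  Real.rpow_pos_of_pos (phi_pos hγ0 hγ1 hx hx1) _

lemma thalerG_rpow {x : ℝ} (hx : 0 < x) (hx1 : x ≤ 1) :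
    (thalerG γ x) ^ (1 - γ) = x ^ (1 - γ) + (1 + x) ^ (1 - γ) - 1 := by
  have hb : (1:ℝ) - γ ≠ 0 := sub_ne_zero.2 (Ne.symm hγ1)
  rw [thalerG, ← Real.rpow_mul (phi_pos hγ0 hγ1 hx hx1).le, one_div,
    inv_mul_cancel₀ hb, Real.rpow_one]

lemma self_lt_thalerG {x : ℝ} (hx : 0 < x) (hx1 : x ≤ 1) : x < thalerG γ x := by
  have hb : (1:ℝ) - γ ≠ 0 := sub_ne_zero.2 (Ne.symm hγ1)
  have hφ := phi_pos hγ0 hγ1 hx hx1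
  rcases lt_or_gt_of_ne hγ1 with h | h
  · have hb0 : (0:ℝ) < 1 - γ := by linarith
    have h1 : (1:ℝ) < (1 + x) ^ (1 - γ) := by
      rw [Real.one_lt_rpow_iff_of_pos (by linarith : (0:ℝ) < 1 + x)]
      exact Or.inl ⟨by linarith, hb0⟩
    have hlt : x ^ (1 - γ) < x ^ (1 - γ) + (1 + x) ^ (1 - γ) - 1 := by linarith
    calc x = (x ^ (1 - γ)) ^ (1 / (1 - γ)) := by
            rw [← Real.rpow_mul hx.le]; rw [mul_one_div, div_self hb, Real.rpow_one]
      _ < thalerG γ x := Real.rpow_lt_rpow (Real.rpow_nonneg hx.le _) hlt (by positivity)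
  · have hb0 : 1 - γ < 0 := by linarith
    have h1 : (1 + x) ^ (1 - γ) < 1 :=
      Real.rpow_lt_one_of_one_lt_of_neg (by linarith) hb0
    have hlt : x ^ (1 - γ) + (1 + x) ^ (1 - γ) - 1 < x ^ (1 - γ) := by linarith
    have hdiv : 1 / (1 - γ) < 0 := by
      apply div_neg_of_pos_of_neg one_pos hb0
    calc x = (x ^ (1 - γ)) ^ (1 / (1 - γ)) := by
            rw [← Real.rpow_mul hx.le]; rw [mul_one_div, div_self hb, Real.rpow_one]
      _ < thalerG γ x := Real.rpow_lt_rpow_of_neg hφ hlt hdiv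

lemma thalerG_lt_thalerG {x y : ℝ} (hx : 0 < x) (hxy : x < y) (hy1 : y ≤ 1) :
    thalerG γ x < thalerG γ y := by
  have hy : 0 < y := hx.trans hxy
  rcases lt_or_gt_of_ne hγ1 with h | h
  · have hb0 : (0:ℝ) < 1 - γ := by linarith
    have h1 : x ^ (1-γ) < y ^ (1-γ) := Real.rpow_lt_rpow hx.le hxy hb0
    have h2 : (1+x) ^ (1-γ) < (1+y) ^ (1-γ) :=
      Real.rpow_lt_rpow (by linarith) (by linarith) hb0
    exact Real.rpow_lt_rpow (phi_pos hγ0 hγ1 hx (hxy.le.trans hy1)).le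
      (by linarith) (by positivity)
  · have hb0 : 1 - γ < 0 := by linarith
    have h1 : y ^ (1-γ) < x ^ (1-γ) := Real.rpow_lt_rpow_of_neg hx hxy hb0
    have h2 : (1+y) ^ (1-γ) < (1+x) ^ (1-γ) :=
      Real.rpow_lt_rpow_of_neg (by linarith) (by linarith) hb0
    have hdiv : 1 / (1 - γ) < 0 := div_neg_of_pos_of_neg one_pos hb0
    exact Real.rpow_lt_rpow_of_neg (phi_pos hγ0 hγ1 hy hy1) (by linarith) hdiv

lemma thalerG_continuousAt {x : ℝ} (hx : 0 < x) (hx1 : x ≤ 1) :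
    ContinuousAt (thalerG γ) x := by
  have h1 : ContinuousAt (fun x : ℝ => x ^ (1-γ) + (1 + x) ^ (1-γ) - 1) x := by
    have a1 : ContinuousAt (fun x : ℝ => x ^ (1-γ)) x :=
      Real.continuousAt_rpow_const x _ (Or.inl hx.ne')
    have a2 : ContinuousAt (fun x : ℝ => (1 + x) ^ (1-γ)) x := by
      have : ContinuousAt (fun x : ℝ => (1 + x)) x := by fun_prop
      exact (Real.continuousAt_rpow_const (1+x) _ (Or.inl (by linarith))).comp this
    exact (a1.add a2).sub continuousAt_const
  exact h1.rpow_const (Or.inl (phi_pos hγ0 hγ1 hx hx1).ne')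

end Basic

section Basic2
variable {γ : ℝ} (hγ0 : 0 < γ) (hγ1 : γ ≠ 1)
include hγ0 hγ1

lemma thalerG_tendsto_zero : Tendsto (thalerG γ) (𝓝[>] 0) (𝓝 0) := by
  rcases lt_or_gt_of_ne hγ1 with h | h
  · -- γ < 1 : φ → 0, exponent 1/(1-γ) > 0
    have hb0 : (0:ℝ) < 1 - γ := by linarith
    have hφ : Tendsto (fun x : ℝ => x ^ (1-γ) + (1 + x) ^ (1-γ) - 1) (𝓝[>] 0) (𝓝 0) := by
      have a1 : Tendsto (fun x : ℝ => x ^ (1-γ)) (𝓝 0) (𝓝 0) := by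
        have := Real.continuousAt_rpow_const 0 (1-γ) (Or.inr hb0.le)
        simpa [Real.zero_rpow hb0.ne'] using this.tendsto
      have a2 : Tendsto (fun x : ℝ => (1 + x) ^ (1-γ)) (𝓝 0) (𝓝 1) := by
        have c1 : ContinuousAt (fun x : ℝ => (1 + x) ^ (1-γ)) 0 := by
          exact (Real.continuousAt_rpow_const (1+0) _ (Or.inl (by norm_num))).comp
            (by fun_prop)
        simpa [Real.one_rpow] using c1.tendsto
      have := (a1.add a2).sub (tendsto_const_nhds (x := (1:ℝ)))
      simpa using this.mono_left nhdsWithin_le_nhds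
    have outer : Tendsto (fun t : ℝ => t ^ (1/(1-γ))) (𝓝 0) (𝓝 0) := by
      have hc := Real.continuousAt_rpow_const 0 (1/(1-γ)) (Or.inr (by positivity))
      have h0 : (0:ℝ) ^ (1/(1-γ)) = 0 := Real.zero_rpow (by positivity : (0:ℝ) < 1/(1-γ)).ne'
      simpa only [h0] using hc.tendsto
    exact outer.comp hφ
  · -- γ > 1 : φ → ∞, exponent < 0
    have hb0 : 1 - γ < 0 := by linarith
    have hφ : Tendsto (fun x : ℝ => x ^ (1-γ) + (1 + x) ^ (1-γ) - 1) (𝓝[>] 0) atTop := by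
      have a1 : Tendsto (fun x : ℝ => x ^ (1-γ)) (𝓝[>] 0) atTop := by
        have b1 : Tendsto (fun x : ℝ => (x⁻¹) ^ (γ - 1)) (𝓝[>] 0) atTop :=
          (tendsto_rpow_atTop (by linarith)).comp tendsto_inv_nhdsGT_zero
        refine b1.congr' ?_
        filter_upwards [self_mem_nhdsWithin] with x (hx : 0 < x)
        rw [← Real.rpow_neg_one x, ← Real.rpow_mul hx.le]
        congr 1; ring
      have a2 : Tendsto (fun x : ℝ => (1 + x) ^ (1-γ) - 1) (𝓝[>] 0) (𝓝 ((1:ℝ)^(1-γ) - 1)) := by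
        have c1 : ContinuousAt (fun x : ℝ => (1 + x) ^ (1-γ) - 1) 0 := by
          exact ((Real.continuousAt_rpow_const (1+0) _ (Or.inl (by norm_num))).comp
            (by fun_prop : ContinuousAt (fun x : ℝ => 1 + x) 0)).sub continuousAt_const
        simpa using (c1.tendsto).mono_left nhdsWithin_le_nhds
      have := a1.atTop_add a2
      refine this.congr fun x => by ring
    have outer : Tendsto (fun t : ℝ => t ^ (1/(1-γ))) atTop (𝓝 0) := by
      have hneg : 1/(1-γ) < 0 := div_neg_of_pos_of_neg one_pos hb0
      have := tendsto_rpow_neg_atTop (y := -(1/(1-γ))) (by linarith)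
      simpa using this
    exact outer.comp hφ

lemma thalerG_exists_preimage {y : ℝ} (hy : 0 < y) (hy1 : y ≤ 1) :
    ∃ x, 0 < x ∧ x < y ∧ thalerG γ x = y := by
  -- find a ∈ (0, y) with thalerG γ a < y
  have h1 : ∀ᶠ a in 𝓝[>] (0:ℝ), thalerG γ a < y :=
    (thalerG_tendsto_zero hγ0 hγ1).eventually (Filter.Tendsto.eventually_lt_const hy tendsto_id)
  have h2 : Ioo (0:ℝ) y ∈ 𝓝[>] (0:ℝ) := Ioo_mem_nhdsGT_of_mem (by simp [hy])
  obtain ⟨a, ha1, ⟨ha2, ha3⟩⟩ := (h1.and (eventually_of_mem h2 fun x hx => hx)).exists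
  have hcont : ContinuousOn (thalerG γ) (Icc a y) := fun z hz =>
    (thalerG_continuousAt hγ0 hγ1 (lt_of_lt_of_le ha2 hz.1) (hz.2.trans hy1)).continuousWithinAt
  have hivt := intermediate_value_Icc ha3.le hcont
  have hy_mem : y ∈ Icc (thalerG γ a) (thalerG γ y) :=
    ⟨ha1.le, (self_lt_thalerG hγ0 hγ1 hy hy1).le⟩
  obtain ⟨x, hx_mem, hx_eq⟩ := hivt hy_mem
  refine ⟨x, lt_of_lt_of_le ha2 hx_mem.1, lt_of_le_of_ne hx_mem.2 ?_, hx_eq⟩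
  rintro rfl
  exact absurd hx_eq (self_lt_thalerG hγ0 hγ1 hy hy1).ne'

end Basic2

section WithXs
variable {γ xs : ℝ} (hγ0 : 0 < γ) (hγ1 : γ ≠ 1) (hxs0 : 0 < xs) (hxs1 : xs < 1)
  (hxseq : xs ^ (1 - γ) + (1 + xs) ^ (1 - γ) = 2)
include hγ0 hγ1 hxs0 hxs1 hxseq

lemma thalerG_xs : thalerG γ xs = 1 := by
  rw [thalerG, hxseq]; norm_num

omit hxs0 hxs1 hxseq in
lemma thalerG_one : thalerG γ 1 = 2 := by
  have hb : (1:ℝ) - γ ≠ 0 := sub_ne_zero.2 (Ne.symm hγ1)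
  rw [thalerG, Real.one_rpow]
  have : (1:ℝ) + (1+1) ^ (1-γ) - 1 = 2 ^ (1-γ) := by norm_num
  rw [this, ← Real.rpow_mul (by norm_num), mul_one_div, div_self hb, Real.rpow_one]

lemma thalerG_exists_preimageY {c : ℝ} (hc : 1 < c) (hc2 : c ≤ 2) :
    ∃ y, xs < y ∧ y ≤ 1 ∧ thalerG γ y = c := by
  have hcont : ContinuousOn (thalerG γ) (Icc xs 1) := fun z hz =>
    (thalerG_continuousAt hγ0 hγ1 (lt_of_lt_of_le hxs0 hz.1) hz.2).continuousWithinAt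
  have hivt := intermediate_value_Icc hxs1.le hcont
  rw [thalerG_xs hγ0 hγ1 hxs0 hxs1 hxseq, thalerG_one hγ0 hγ1] at hivt
  obtain ⟨y, hy_mem, hy_eq⟩ := hivt ⟨hc.le, hc2⟩
  refine ⟨y, lt_of_le_of_ne hy_mem.1 ?_, hy_mem.2, hy_eq⟩
  rintro rfl
  rw [thalerG_xs hγ0 hγ1 hxs0 hxs1 hxseq] at hy_eq
  exact absurd hy_eq hc.ne

end WithXs

section Seq
variable {γ xs : ℝ} (hγ0 : 0 < γ) (hγ1 : γ ≠ 1)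
include hγ0 hγ1

lemma exists_xseq (hxs0 : 0 < xs) (hxs1 : xs ≤ 1) :
    ∃ x : ℕ → ℝ, x 0 = xs ∧ (∀ n, 0 < x n) ∧ (∀ n, x n ≤ 1) ∧
      (∀ n, x (n+1) < x n) ∧ (∀ n, thalerG γ (x (n+1)) = x n) := by
  have H : ∀ y : ℝ, 0 < y → y ≤ 1 → ∃ x, 0 < x ∧ x < y ∧ thalerG γ x = y :=
    fun y hy hy1 => thalerG_exists_preimage hγ0 hγ1 hy hy1
  let F : ℕ → {z : ℝ // 0 < z ∧ z ≤ 1} := fun n => Nat.rec ⟨xs, hxs0, hxs1⟩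
    (fun _ p => ⟨(H p.1 p.2.1 p.2.2).choose, (H p.1 p.2.1 p.2.2).choose_spec.1,
      ((H p.1 p.2.1 p.2.2).choose_spec.2.1.le.trans p.2.2)⟩) n
  refine ⟨fun n => (F n).1, rfl, fun n => (F n).2.1, fun n => (F n).2.2,
    fun n => ?_, fun n => ?_⟩
  · exact (H (F n).1 (F n).2.1 (F n).2.2).choose_spec.2.1
  · exact (H (F n).1 (F n).2.1 (F n).2.2).choose_spec.2.2

end Seq

section Core
variable {γ : ℝ} (hγ0 : 0 < γ) (hγ1 : γ ≠ 1)
include hγ0 hγ1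

lemma psi_ne_zero {x : ℝ} (hx : 0 < x) : (1 + x) ^ (1 - γ) - 1 ≠ 0 := by
  rcases lt_or_gt_of_ne hγ1 with h | h
  · have : (1:ℝ) < (1 + x) ^ (1 - γ) := by
      rw [Real.one_lt_rpow_iff_of_pos (by linarith : (0:ℝ) < 1 + x)]
      exact Or.inl ⟨by linarith, by linarith⟩
    exact sub_ne_zero.2 this.ne'
  · have : (1 + x) ^ (1 - γ) < 1 :=
      Real.rpow_lt_one_of_one_lt_of_neg (by linarith) (by linarith)
    exact sub_ne_zero.2 this.ne

lemma tendsto_slopeA :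
    Tendsto (fun x : ℝ => ((1 + x) ^ (1 - γ) - 1) / x) (𝓝[>] 0) (𝓝 (1 - γ)) := by
  have hD : HasDerivAt (fun u : ℝ => (1 + u) ^ (1 - γ)) (1 - γ) 0 := by
    have h1 : HasDerivAt (fun u : ℝ => 1 + u) 1 0 := (hasDerivAt_id 0).const_add 1
    have := h1.rpow_const (p := 1 - γ) (Or.inl (by norm_num))
    simpa using this
  have := hasDerivAt_iff_tendsto_slope.1 hD
  have h2 : Tendsto (slope (fun u : ℝ => (1 + u) ^ (1 - γ)) 0) (𝓝[>] 0) (𝓝 (1 - γ)) :=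
    this.mono_left (nhdsWithin_mono 0 fun z hz => ne_of_gt hz)
  refine h2.congr' ?_
  filter_upwards [self_mem_nhdsWithin] with z (hz : 0 < z)
  rw [slope_def_field]
  simp [div_eq_div_iff, hz.ne']

lemma tendsto_slopeB :
    Tendsto (fun t : ℝ => (1 - (1 + t) ^ (-γ / (1 - γ))) / t) (𝓝[≠] 0)
      (𝓝 (γ / (1 - γ))) := by
  have hD : HasDerivAt (fun u : ℝ => -((1 + u) ^ (-γ / (1 - γ)))) (γ / (1 - γ)) 0 := by
    have h1 : HasDerivAt (fun u : ℝ => 1 + u) 1 0 := (hasDerivAt_id 0).const_add 1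
    have := (h1.rpow_const (p := -γ / (1 - γ)) (Or.inl (by norm_num))).neg
    simpa [neg_div, Pi.neg_def] using this
  have h2 := hasDerivAt_iff_tendsto_slope.1 hD
  refine h2.congr' ?_
  filter_upwards [self_mem_nhdsWithin] with z (hz : z ≠ 0)
  rw [slope_def_field]
  simp only [sub_zero]
  rw [div_eq_div_iff hz hz]
  norm_num
  left; ring

end Core

section Core2
variable {γ : ℝ} (hγ0 : 0 < γ) (hγ1 : γ ≠ 1)
include hγ0 hγ1

lemma tendsto_diff_inv_rpow :
    Tendsto (fun x : ℝ => x ^ (-γ) - (thalerG γ x) ^ (-γ)) (𝓝[>] 0) (𝓝 γ) := by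
  have hbne : (1 - γ) ≠ 0 := sub_ne_zero.2 (Ne.symm hγ1)
  set b := 1 - γ with hb
  set c := -γ / b with hc
  set t : ℝ → ℝ := fun x => ((1 + x) ^ b - 1) * x ^ (-b) with ht
  have limt : Tendsto t (𝓝[>] 0) (𝓝[≠] 0) := by
    rw [tendsto_nhdsWithin_iff]
    constructor
    · have lim1 : Tendsto (fun x : ℝ => x ^ γ) (𝓝[>] 0) (𝓝 0) := by
        have hcp := Real.continuousAt_rpow_const 0 γ (Or.inr hγ0.le)
        have h0 : (0:ℝ) ^ γ = 0 := Real.zero_rpow hγ0.ne'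
        exact (by simpa only [h0] using hcp.tendsto :
          Tendsto (fun x : ℝ => x ^ γ) (𝓝 0) (𝓝 0)).mono_left nhdsWithin_le_nhds
      have := (tendsto_slopeA hγ0 hγ1).mul lim1
      rw [mul_zero] at this
      refine this.congr' ?_
      filter_upwards [self_mem_nhdsWithin] with x (hx : 0 < x)
      rw [ht]
      rw [div_mul_eq_mul_div, div_eq_iff hx.ne', mul_assoc]
      congr 1
      symm
      nth_rewrite 2 [← Real.rpow_one x]
      rw [← Real.rpow_add hx]
      congr 1
      rw [hb]; ring
    · filter_upwards [self_mem_nhdsWithin] with x (hx : 0 < x)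
      exact mul_ne_zero (psi_ne_zero hγ0 hγ1 hx) (Real.rpow_pos_of_pos hx _).ne'
  have final := ((tendsto_slopeB hγ0 hγ1).comp limt).mul (tendsto_slopeA hγ0 hγ1)
  have hval : γ / b * b = γ := div_mul_cancel₀ γ hbne
  rw [hval] at final
  refine final.congr' ?_
  have hmem : Ioo (0:ℝ) 1 ∈ 𝓝[>] (0:ℝ) := Ioo_mem_nhdsGT_of_mem (by norm_num)
  filter_upwards [eventually_of_mem hmem fun x hx => hx] with x hx
  obtain ⟨hx0, hx1⟩ := hx
  have hψ : (1 + x) ^ b - 1 ≠ 0 := psi_ne_zero hγ0 hγ1 hx0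
  have hφ : 0 < x ^ b + (1 + x) ^ b - 1 := phi_pos hγ0 hγ1 hx0 hx1.le
  have hg : 0 < thalerG γ x := thalerG_pos hγ0 hγ1 hx0 hx1.le
  have hxb : (0:ℝ) < x ^ (-b) := Real.rpow_pos_of_pos hx0 _
  have hxbb : x ^ b * x ^ (-b) = 1 := by
    rw [← Real.rpow_add hx0]; simp
  have hφx : 1 + t x = (x ^ b + (1 + x) ^ b - 1) * x ^ (-b) := by
    rw [ht]
    have expand : (x ^ b + (1 + x) ^ b - 1) * x ^ (-b)
        = x ^ b * x ^ (-b) + ((1 + x) ^ b - 1) * x ^ (-b) := by ring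
    rw [expand, hxbb]
  have hPQ : x ^ γ * x ^ (-γ) = 1 := by
    rw [← Real.rpow_add hx0]; simp
  have hxx : x ^ (-b) * x = x ^ γ := by
    nth_rewrite 2 [← Real.rpow_one x]
    rw [← Real.rpow_add hx0]
    congr 1
    rw [hb]; ring
  have h2 : (1 + t x) ^ c = (thalerG γ x) ^ (-γ) * x ^ γ := by
    rw [hφx, Real.mul_rpow hφ.le hxb.le]
    congr 1
    · rw [thalerG]
      rw [← Real.rpow_mul hφ.le]
      congr 1
      rw [hc, hb]; field_simp
    · rw [← Real.rpow_mul hx0.le]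
      congr 1
      rw [hc, hb]; field_simp
  show (1 - (1 + t x) ^ (-γ/(1-γ))) / t x * (((1 + x) ^ (1-γ) - 1) / x)
      = x ^ (-γ) - thalerG γ x ^ (-γ)
  have hcc : -γ/(1-γ) = c := by rw [hc, hb]
  rw [hcc, h2]
  have htx : t x = ((1 + x) ^ b - 1) * x ^ (-b) := rfl
  rw [htx, div_mul_div_comm,
    div_eq_iff (mul_ne_zero (mul_ne_zero hψ hxb.ne') hx0.ne')]
  linear_combination (-(x ^ (-γ) - thalerG γ x ^ (-γ)) * ((1 + x) ^ b - 1)) * hxx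
    + (-((1 + x) ^ b - 1)) * hPQ

end Core2

section SeqLimit
variable {γ xs : ℝ} (hγ0 : 0 < γ) (hγ1 : γ ≠ 1) (hxs0 : 0 < xs) (hxs1 : xs < 1)
  {x : ℕ → ℝ} (hx0 : x 0 = xs) (hxpos : ∀ n, 0 < x n) (hx1 : ∀ n, x n ≤ 1)
  (hxlt : ∀ n, x (n+1) < x n) (hxg : ∀ n, thalerG γ (x (n+1)) = x n)
include hγ0 hγ1 hxs0 hxs1 hx0 hxpos hx1 hxlt hxg

lemma xseq_tendsto_zero : Tendsto x atTop (𝓝 0) := by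
  have hanti : StrictAnti x := strictAnti_nat_of_succ_lt hxlt
  have hbdd : BddBelow (range x) := ⟨0, fun z hz => by
    obtain ⟨n, rfl⟩ := hz; exact (hxpos n).le⟩
  have hlim : Tendsto x atTop (𝓝 (⨅ n, x n)) :=
    tendsto_atTop_ciInf hanti.antitone hbdd
  set L := ⨅ n, x n with hL
  have hL0 : 0 ≤ L := le_ciInf fun n => (hxpos n).le
  rcases eq_or_lt_of_le hL0 with h | h
  · rwa [← h] at hlim
  · exfalso
    have hL1 : L ≤ 1 := le_trans (ciInf_le hbdd 0) (hx1 0)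
    have hcont := thalerG_continuousAt hγ0 hγ1 h hL1
    have hshift : Tendsto (fun n => x (n+1)) atTop (𝓝 L) :=
      hlim.comp (tendsto_add_atTop_nat 1)
    have h1 : Tendsto (fun n => thalerG γ (x (n+1))) atTop (𝓝 (thalerG γ L)) :=
      hcont.tendsto.comp hshift
    have h2 : Tendsto (fun n => thalerG γ (x (n+1))) atTop (𝓝 L) := by
      simpa only [hxg] using hlim
    have := tendsto_nhds_unique h1 h2
    exact absurd this (self_lt_thalerG hγ0 hγ1 h hL1).ne'

lemma xseq_rpow_tendsto :
    Tendsto (fun n : ℕ => (n:ℝ) ^ (1/γ) * x n) atTop (𝓝 ((1/γ) ^ (1/γ))) := by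
  have hzero := xseq_tendsto_zero hγ0 hγ1 hxs0 hxs1 hx0 hxpos hx1 hxlt hxg
  have hzero' : Tendsto x atTop (𝓝[>] 0) := by
    rw [tendsto_nhdsWithin_iff]
    exact ⟨hzero, Eventually.of_forall fun n => hxpos n⟩
  set v : ℕ → ℝ := fun n => (x n) ^ (-γ) with hv
  have hdiff : Tendsto (fun n => v (n+1) - v n) atTop (𝓝 γ) := by
    have hcomp := (tendsto_diff_inv_rpow hγ0 hγ1).comp
      (hzero'.comp (tendsto_add_atTop_nat 1))
    refine hcomp.congr fun n => ?_
    simp only [Function.comp_apply, hv]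
    rw [hxg n]
  have hces := hdiff.cesaro
  have hsum : ∀ n, ∑ i ∈ Finset.range n, (v (i+1) - v i) = v n - v 0 :=
    fun n => Finset.sum_range_sub v n
  have hv0 : Tendsto (fun n : ℕ => v 0 / (n:ℝ)) atTop (𝓝 0) :=
    tendsto_const_div_atTop_nhds_zero_nat (v 0)
  have hvn : Tendsto (fun n : ℕ => v n / (n:ℝ)) atTop (𝓝 γ) := by
    have := hces.add hv0
    rw [add_zero] at this
    refine this.congr fun n => ?_
    rw [hsum n]
    rcases eq_or_ne ((n:ℕ):ℝ) 0 with h | h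
    · simp [h]
    · field_simp; ring
  have hcont : ContinuousAt (fun z : ℝ => z ^ (-(1/γ))) γ :=
    Real.continuousAt_rpow_const γ _ (Or.inl hγ0.ne')
  have hlim2 : Tendsto (fun n : ℕ => (v n / (n:ℝ)) ^ (-(1/γ))) atTop (𝓝 (γ ^ (-(1/γ)))) :=
    hcont.tendsto.comp hvn
  have hγval : γ ^ (-(1/γ)) = (1/γ) ^ (1/γ) := by
    rw [Real.rpow_neg hγ0.le, one_div, Real.inv_rpow hγ0.le]
  rw [hγval] at hlim2
  refine hlim2.congr' ?_
  filter_upwards [eventually_ge_atTop 1] with n hn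
  have hnpos : (0:ℝ) < (n:ℝ) := by exact_mod_cast hn
  have hvpos : 0 < v n := Real.rpow_pos_of_pos (hxpos n) _
  rw [Real.div_rpow hvpos.le hnpos.le, hv]
  simp only []
  rw [← Real.rpow_mul (hxpos n).le]
  rw [show -γ * -(1/γ) = 1 by field_simp]
  rw [Real.rpow_one, Real.rpow_neg hnpos.le, div_inv_eq_mul]
  ring

end SeqLimit

section Dyn
variable {γ xs : ℝ} (hγ0 : 0 < γ) (hγ1 : γ ≠ 1) (hxs0 : 0 < xs) (hxs1 : xs < 1)
  (hxseq : xs ^ (1 - γ) + (1 + xs) ^ (1 - γ) = 2)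
include hγ0 hγ1

lemma thalerG_le_thalerG {u w : ℝ} (hu : 0 < u) (huw : u ≤ w) (hw : w ≤ 1) :
    thalerG γ u ≤ thalerG γ w := by
  rcases eq_or_lt_of_le huw with rfl | h
  · exact le_rfl
  · exact (thalerG_lt_thalerG hγ0 hγ1 hu h hw).le

lemma thalerT_left {z : ℝ} (hz0 : 0 < z) (hz : z ≤ xs) :
    thalerT γ xs z = thalerG γ z := by
  rw [thalerT, if_neg (not_le.2 hz0), if_pos hz]

omit hγ0 hγ1 in
lemma thalerT_Y (h0 : 0 < xs) {z : ℝ} (hz : xs < z) :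
    thalerT γ xs z = thalerG γ z - 1 := by
  rw [thalerT, if_neg (not_le.2 (h0.trans hz)), if_neg (not_le.2 hz)]

end Dyn

section Dyn2
variable {γ xs : ℝ} (hγ0 : 0 < γ) (hγ1 : γ ≠ 1) (hxs0 : 0 < xs) (hxs1 : xs < 1)
  (hxseq : xs ^ (1 - γ) + (1 + xs) ^ (1 - γ) = 2)
  {x : ℕ → ℝ} (hx0 : x 0 = xs) (hxpos : ∀ n, 0 < x n) (hx1 : ∀ n, x n ≤ 1)
  (hxlt : ∀ n, x (n+1) < x n) (hxg : ∀ n, thalerG γ (x (n+1)) = x n)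
include hγ0 hγ1 hxs0 hxs1 hxseq hx0 hxpos hx1 hxlt hxg

lemma x_le_xs : ∀ n, x n ≤ xs := by
  intro n
  have : x n ≤ x 0 := (strictAnti_nat_of_succ_lt hxlt).antitone (Nat.zero_le n)
  rwa [hx0] at this

-- Claim 1: staying below xs for the first m+1 steps
lemma claim_stay {y : ℝ} (m : ℕ) (hy : xs < y) (hyle : thalerG γ y ≤ 1 + x m) (hy1 : y ≤ 1) :
    ∀ k, 1 ≤ k → k ≤ m + 1 →
      0 < (thalerT γ xs)^[k] y ∧ (thalerT γ xs)^[k] y ≤ x (m + 1 - k) := by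
  intro k hk1 hk2
  induction k with
  | zero => omega
  | succ k ih =>
    rcases Nat.eq_or_lt_of_le hk1 with h1 | h1
    · -- k + 1 = 1
      have hk0 : k = 0 := by omega
      subst hk0
      simp only [zero_add, Function.iterate_one]
      rw [thalerT_Y hxs0 hy]
      constructor
      · have : (1:ℝ) < thalerG γ y := by
          rw [← thalerG_xs hγ0 hγ1 hxs0 hxs1 hxseq]
          exact thalerG_lt_thalerG hγ0 hγ1 hxs0 hy hy1
        linarith
      · have : m + 1 - 1 = m := by omega
        rw [this]; linarith
    · -- k ≥ 1
      have hk : 1 ≤ k := by omega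
      have hkm : k ≤ m + 1 := by omega
      obtain ⟨hz0, hzle⟩ := ih hk hkm
      set z := (thalerT γ xs)^[k] y with hzdef
      have hidx : 1 ≤ m + 1 - k := by omega
      have hzxs : z ≤ xs := hzle.trans (x_le_xs hγ0 hγ1 hxs0 hxs1 hxseq hx0 hxpos hx1 hxlt hxg _)
      rw [Function.iterate_succ_apply', ← hzdef, thalerT_left hγ0 hγ1 hz0 hzxs]
      constructor
      · exact (thalerG_pos hγ0 hγ1 hz0 (hzxs.trans hxs1.le))
      · have step : thalerG γ z ≤ thalerG γ (x (m + 1 - k)) :=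
          thalerG_le_thalerG hγ0 hγ1 hz0 hzle (hx1 _)
        have : m + 1 - k = (m - k) + 1 := by omega
        rw [this] at step
        rw [hxg (m - k)] at step
        have : m + 1 - (k + 1) = m - k := by omega
        rw [this]
        exact step

-- Claim 2: return from (x m, xs] within m steps
lemma claim_return : ∀ m, ∀ z, x m < z → z ≤ xs →
    ∃ k, 1 ≤ k ∧ k ≤ m ∧ xs < (thalerT γ xs)^[k] z ∧ (thalerT γ xs)^[k] z ≤ 1 := by
  intro m
  induction m with
  | zero =>
    intro z hz1 hz2
    rw [hx0] at hz1
    exact absurd hz2 (not_le.2 hz1)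
  | succ m ih =>
    intro z hz1 hz2
    have hz0 : 0 < z := (hxpos _).trans hz1
    have hTz : thalerT γ xs z = thalerG γ z := thalerT_left hγ0 hγ1 hz0 hz2
    have hgz_gt : x m < thalerG γ z := by
      rw [← hxg m]
      exact thalerG_lt_thalerG hγ0 hγ1 (hxpos _) hz1 (hz2.trans hxs1.le)
    have hgz_le : thalerG γ z ≤ 1 := by
      rw [← thalerG_xs hγ0 hγ1 hxs0 hxs1 hxseq]
      exact thalerG_le_thalerG hγ0 hγ1 hz0 hz2 hxs1.le
    rcases le_or_gt (thalerG γ z) xs with hle | hlt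
    · obtain ⟨k, hk1, hk2, hk3⟩ := ih (thalerG γ z) hgz_gt hle
      refine ⟨k + 1, by omega, by omega, ?_⟩
      rwa [Function.iterate_succ_apply, hTz]
    · exact ⟨1, le_rfl, by omega, by simpa [hTz] using ⟨hlt, hgz_le⟩⟩

-- Claim 3: eventual return from Y
lemma claim_eventual {y : ℝ} (hy : xs < y) (hy1 : y ≤ 1) :
    ∃ k, 1 ≤ k ∧ xs < (thalerT γ xs)^[k] y ∧ (thalerT γ xs)^[k] y ≤ 1 := by
  have hTy : thalerT γ xs y = thalerG γ y - 1 := thalerT_Y hxs0 hy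
  have hg1 : (1:ℝ) < thalerG γ y := by
    rw [← thalerG_xs hγ0 hγ1 hxs0 hxs1 hxseq]
    exact thalerG_lt_thalerG hγ0 hγ1 hxs0 hy hy1
  have hg2 : thalerG γ y ≤ 2 := by
    rw [← thalerG_one hγ0 hγ1]
    exact thalerG_le_thalerG hγ0 hγ1 (hxs0.trans hy) hy1 le_rfl
  rcases le_or_gt (thalerG γ y - 1) xs with hle | hlt
  · -- T y ∈ (0, xs]; find m with x m < T y
    have hpos : 0 < thalerG γ y - 1 := by linarith
    have hzero := xseq_tendsto_zero hγ0 hγ1 hxs0 hxs1 hx0 hxpos hx1 hxlt hxg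
    obtain ⟨m, hm⟩ := ((hzero.eventually (Filter.Tendsto.eventually_lt_const hpos tendsto_id)).and
      (Eventually.of_forall fun _ => trivial)).exists
    obtain ⟨k, hk1, _, hk3, hk4⟩ := claim_return hγ0 hγ1 hxs0 hxs1 hxseq hx0 hxpos hx1 hxlt hxg
      m (thalerG γ y - 1) hm.1 hle
    refine ⟨k + 1, by omega, ?_, ?_⟩
    · rwa [Function.iterate_succ_apply, hTy]
    · rwa [Function.iterate_succ_apply, hTy]
  · exact ⟨1, le_rfl, by simpa [hTy] using ⟨hlt, by linarith⟩⟩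

end Dyn2

section Dyn3
variable {γ xs : ℝ} (hγ0 : 0 < γ) (hγ1 : γ ≠ 1) (hxs0 : 0 < xs) (hxs1 : xs < 1)
  (hxseq : xs ^ (1 - γ) + (1 + xs) ^ (1 - γ) = 2)
  {x : ℕ → ℝ} (hx0 : x 0 = xs) (hxpos : ∀ n, 0 < x n) (hx1 : ∀ n, x n ≤ 1)
  (hxlt : ∀ n, x (n+1) < x n) (hxg : ∀ n, thalerG γ (x (n+1)) = x n)
  {y : ℕ → ℝ} (hys : ∀ m, xs < y m) (hy1 : ∀ m, y m ≤ 1)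
  (hyg : ∀ m, thalerG γ (y m) = 1 + x m)
include hγ0 hγ1 hxs0 hxs1 hxseq hx0 hxpos hx1 hxlt hxg hys hy1 hyg

lemma tau_set_eq {n : ℕ} (hn : 1 ≤ n) :
    {v | v ∈ Ioc xs 1 ∧ n < thalerTau γ xs v} = Ioc xs (y (n-1)) := by
  ext v
  simp only [mem_setOf_eq, mem_Ioc]
  constructor
  · rintro ⟨⟨hv1, hv2⟩, hτ⟩
    refine ⟨hv1, ?_⟩
    by_contra hcon
    push_neg at hcon
    -- y (n-1) < v : show return within n steps
    have hTv : thalerT γ xs v = thalerG γ v - 1 := thalerT_Y hxs0 hv1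
    have hgt : x (n-1) < thalerG γ v - 1 := by
      have := thalerG_lt_thalerG hγ0 hγ1 (hxs0.trans (hys (n-1))) hcon hv2
      rw [hyg (n-1)] at this
      linarith
    have hle1 : thalerG γ v - 1 ≤ 1 := by
      have := thalerG_le_thalerG hγ0 hγ1 (hxs0.trans hv1) hv2 le_rfl
      rw [thalerG_one hγ0 hγ1] at this
      linarith
    have hτle : ∀ k, 1 ≤ k → xs < (thalerT γ xs)^[k] v → (thalerT γ xs)^[k] v ≤ 1 →
        thalerTau γ xs v ≤ k := fun k hk h1 h2 => Nat.sInf_le ⟨hk, h1, h2⟩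
    rcases le_or_gt (thalerG γ v - 1) xs with hle | hlt
    · obtain ⟨k, hk1, hk2, hk3, hk4⟩ := claim_return hγ0 hγ1 hxs0 hxs1 hxseq hx0 hxpos
        hx1 hxlt hxg (n-1) (thalerG γ v - 1) hgt hle
      have : thalerTau γ xs v ≤ k + 1 := by
        apply hτle _ (by omega)
        · rwa [Function.iterate_succ_apply, hTv]
        · rwa [Function.iterate_succ_apply, hTv]
      omega
    · have : thalerTau γ xs v ≤ 1 := by
        apply hτle 1 le_rfl
        · simpa [hTv] using hlt
        · simpa [hTv] using hle1
      omega
  · rintro ⟨hv1, hv2⟩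
    have hv2' : v ≤ 1 := hv2.trans (hy1 _)
    refine ⟨⟨hv1, hv2'⟩, ?_⟩
    have hyle : thalerG γ v ≤ 1 + x (n-1) := by
      rw [← hyg (n-1)]
      exact thalerG_le_thalerG hγ0 hγ1 (hxs0.trans hv1) hv2 (hy1 _)
    have hstay := claim_stay hγ0 hγ1 hxs0 hxs1 hxseq hx0 hxpos hx1 hxlt hxg (n-1) hv1 hyle hv2'
    have hne : {k : ℕ | 1 ≤ k ∧ (thalerT γ xs)^[k] v ∈ Ioc xs 1}.Nonempty := by
      obtain ⟨k, hk1, hk2, hk3⟩ := claim_eventual hγ0 hγ1 hxs0 hxs1 hxseq hx0 hxpos hx1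
        hxlt hxg hv1 hv2'
      exact ⟨k, hk1, hk2, hk3⟩
    have hmem := Nat.sInf_mem hne
    set K := sInf {k : ℕ | 1 ≤ k ∧ (thalerT γ xs)^[k] v ∈ Ioc xs 1} with hK
    have hKτ : thalerTau γ xs v = K := rfl
    by_contra hcon
    push_neg at hcon
    rw [hKτ] at hcon
    -- K ≤ n, K ≥ 1 : contradiction with claim_stay
    have hKn : K ≤ (n-1) + 1 := by omega
    obtain ⟨h1, h2⟩ := hstay K hmem.1 hKn
    have := hmem.2.1
    have hxle : x ((n-1) + 1 - K) ≤ xs := x_le_xs hγ0 hγ1 hxs0 hxs1 hxseq hx0 hxpos hx1 hxlt hxg _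
    have : (thalerT γ xs)^[K] v ≤ xs := h2.trans hxle
    exact absurd hmem.2.1 (not_lt.2 this)

end Dyn3

def Hfun (γ z : ℝ) : ℝ := (z ^ (1-γ) + (1+z) ^ (1-γ)) / (1-γ)

section Meas
variable {γ : ℝ} (hγ0 : 0 < γ) (hγ1 : γ ≠ 1)
include hγ0 hγ1

lemma Hfun_hasDerivAt {z : ℝ} (hz : 0 < z) : HasDerivAt (Hfun γ) (thalerH γ z) z := by
  have hbne : (1:ℝ) - γ ≠ 0 := sub_ne_zero.2 (Ne.symm hγ1)
  have h1 : HasDerivAt (fun w : ℝ => w ^ (1-γ)) ((1-γ) * z ^ (1-γ-1)) z :=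
    Real.hasDerivAt_rpow_const (Or.inl hz.ne')
  have h2 : HasDerivAt (fun w : ℝ => (1+w) ^ (1-γ)) (1 * ((1-γ) * (1+z) ^ (1-γ-1))) z := by
    have hi : HasDerivAt (fun w : ℝ => 1 + w) 1 z := (hasDerivAt_id z).const_add 1
    exact (Real.hasDerivAt_rpow_const (p := 1-γ) (Or.inl (by linarith))).comp z hi |>.congr_deriv
      (by ring)
  have := (h1.add h2).div_const (1-γ)
  refine this.congr_deriv ?_
  rw [thalerH]
  have he : (1:ℝ) - γ - 1 = -γ := by ring
  rw [he]
  field_simp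
  ring_nf

lemma thalerH_nonneg {z : ℝ} (hz : 0 ≤ z) : 0 ≤ thalerH γ z :=
  add_nonneg (Real.rpow_nonneg hz _) (Real.rpow_nonneg (by linarith) _)

lemma thalerH_continuousOn {a b : ℝ} (ha : 0 < a) :
    ContinuousOn (thalerH γ) (Icc a b) := by
  intro z hz
  have hz0 : 0 < z := lt_of_lt_of_le ha hz.1
  have c1 : ContinuousAt (fun w : ℝ => w ^ (-γ)) z :=
    Real.continuousAt_rpow_const z _ (Or.inl hz0.ne')
  have c2 : ContinuousAt (fun w : ℝ => (w + 1) ^ (-γ)) z := by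
    have hadd : ContinuousAt (fun w : ℝ => w + 1) z := by fun_prop
    have hc : ContinuousAt ((fun u : ℝ => u ^ (-γ)) ∘ (fun w : ℝ => w + 1)) z :=
      ContinuousAt.comp (Real.continuousAt_rpow_const (z+1) _ (Or.inl (by linarith))) hadd
    exact hc
  exact ((c1.add c2)).continuousWithinAt

lemma thalerMu_Ioc {a b : ℝ} (ha : 0 < a) (hab : a ≤ b) (hb : b ≤ 1) :
    thalerMu γ (Ioc a b) = ENNReal.ofReal (Hfun γ b - Hfun γ a) := by
  rw [thalerMu, withDensity_apply _ measurableSet_Ioc]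
  rw [Measure.restrict_restrict measurableSet_Ioc]
  have hsub : Ioc a b ∩ Icc 0 1 = Ioc a b := by
    apply inter_eq_left.2
    intro z hz
    exact ⟨(ha.trans_le hz.1.le).le, hz.2.trans hb⟩
  rw [hsub]
  have hint : IntegrableOn (thalerH γ) (Ioc a b) volume := by
    have := (thalerH_continuousOn hγ0 hγ1 (a := a) (b := b) ha).integrableOn_Icc (μ := volume)
    exact this.mono_set Ioc_subset_Icc_self
  have hnn : 0 ≤ᵐ[volume.restrict (Ioc a b)] thalerH γ := by
    refine (ae_restrict_iff' measurableSet_Ioc).2 (Eventually.of_forall fun z hz => ?_)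
    exact thalerH_nonneg hγ0 hγ1 (ha.trans_le hz.1.le).le
  rw [← MeasureTheory.ofReal_integral_eq_lintegral_ofReal hint hnn]
  congr 1
  rw [← intervalIntegral.integral_of_le hab]
  apply intervalIntegral.integral_eq_sub_of_hasDerivAt
  · intro z hz
    rw [uIcc_of_le hab] at hz
    exact Hfun_hasDerivAt hγ0 hγ1 (ha.trans_le hz.1)
  · apply ContinuousOn.intervalIntegrable
    rw [uIcc_of_le hab]
    exact thalerH_continuousOn hγ0 hγ1 ha

end Meas


/-- Proposition 5.3: For every `γ ∈ (0,1) ∪ (1,∞)`, the first return time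
`τ` to `Y = (x*,1]` satisfies `μ_Y(τ > n) ∼ e_α n^(-α)` as `n → ∞`, where `α = 1/γ` and
`e_α = α^α (1−γ)/(2^(1−γ)−1) > 0`; precisely `n^α μ_Y{y ∈ Y : τ(y) > n} → e_α`. -/
theorem thaler_return_time_tail_asymptotics (γ : ℝ)
    (hγ : γ ∈ Set.Ioo (0 : ℝ) 1 ∪ Set.Ioi (1 : ℝ))
    (xs : ℝ) (hxs : xs ∈ Set.Ioo (0 : ℝ) 1)
    (hxseq : xs ^ (1 - γ) + (1 + xs) ^ (1 - γ) = 2) :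
    0 < (1 / γ) ^ (1 / γ) * ((1 - γ) / (2 ^ (1 - γ) - 1)) ∧
    Tendsto
      (fun n : ℕ => (n : ℝ) ^ (1 / γ) *
        (thalerMuY γ xs {y | y ∈ Set.Ioc xs 1 ∧ n < thalerTau γ xs y}).toReal)
      atTop
      (nhds ((1 / γ) ^ (1 / γ) * ((1 - γ) / (2 ^ (1 - γ) - 1)))) := by
  obtain ⟨hxs0, hxs1⟩ := hxs
  have hγ0 : 0 < γ := by
    rcases hγ with h | h
    · exact h.1
    · have := mem_Ioi.1 h; linarith
  have hγ1 : γ ≠ 1 := by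
    rcases hγ with h | h
    · exact h.2.ne
    · exact (mem_Ioi.1 h).ne'
  have hbne : (1:ℝ) - γ ≠ 0 := sub_ne_zero.2 (Ne.symm hγ1)
  have hsign : 0 < (1-γ) / (2 ^ (1-γ) - 1) := by
    rcases lt_or_gt_of_ne hγ1 with h | h
    · have h2 : (1:ℝ) < 2 ^ (1-γ) := by
        rw [Real.one_lt_rpow_iff_of_pos (by norm_num : (0:ℝ) < 2)]
        exact Or.inl ⟨one_lt_two, by linarith⟩
      exact div_pos (by linarith) (by linarith)
    · have h2 : (2:ℝ) ^ (1-γ) < 1 := Real.rpow_lt_one_of_one_lt_of_neg one_lt_two (by linarith)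
      have h2' : (0:ℝ) < 2 ^ (1-γ) := Real.rpow_pos_of_pos two_pos _
      exact div_pos_of_neg_of_neg (by linarith) (by linarith)
  have hpos : 0 < (1/γ)^(1/γ) * ((1-γ)/(2^(1-γ)-1)) :=
    mul_pos (Real.rpow_pos_of_pos (by positivity) _) hsign
  refine ⟨hpos, ?_⟩
  have hCYne : ((2:ℝ)^(1-γ) - 1) ≠ 0 := by
    intro h
    rw [h, div_zero] at hsign
    exact lt_irrefl _ hsign
  have hCY : 0 < ((2:ℝ)^(1-γ)-1)/(1-γ) := by
    have : ((2:ℝ)^(1-γ)-1)/(1-γ) = ((1-γ)/(2^(1-γ)-1))⁻¹ := by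
      rw [inv_div]
    rw [this]
    exact inv_pos.2 hsign
  -- sequences
  obtain ⟨x, hx0, hxpos, hx1, hxlt, hxg⟩ := exists_xseq hγ0 hγ1 hxs0 hxs1.le
  have hxle : ∀ n, x n ≤ xs := x_le_xs hγ0 hγ1 hxs0 hxs1 hxseq hx0 hxpos hx1 hxlt hxg
  have hY : ∀ n : ℕ, ∃ w, xs < w ∧ w ≤ 1 ∧ thalerG γ w = 1 + x n := fun n =>
    thalerG_exists_preimageY hγ0 hγ1 hxs0 hxs1 hxseq (by linarith [hxpos n])
      (by linarith [hxle n, hxs1])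
  choose y hys hy1 hyg using hY
  -- measure computations
  have hmuY : thalerMu γ (Set.Ioc xs 1) = ENNReal.ofReal ((2^(1-γ)-1)/(1-γ)) := by
    rw [thalerMu_Ioc hγ0 hγ1 hxs0 hxs1.le le_rfl]
    congr 1
    have e1 : Hfun γ 1 = (1 + 2^(1-γ))/(1-γ) := by
      rw [Hfun, Real.one_rpow]
      norm_num
    have e2 : Hfun γ xs = 2/(1-γ) := by rw [Hfun, hxseq]
    rw [e1, e2]
    ring
  have hWnn : ∀ m : ℕ, 0 ≤ ((1 + x m)^(1-γ) - 1)/(1-γ) := by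
    intro m
    rcases lt_or_gt_of_ne hγ1 with h | h
    · have h2 : (1:ℝ) < (1 + x m) ^ (1-γ) := by
        rw [Real.one_lt_rpow_iff_of_pos (by linarith [hxpos m] : (0:ℝ) < 1 + x m)]
        exact Or.inl ⟨by linarith [hxpos m], by linarith⟩
      exact (div_pos (by linarith) (by linarith)).le
    · have h2 : (1 + x m) ^ (1-γ) < 1 :=
        Real.rpow_lt_one_of_one_lt_of_neg (by linarith [hxpos m]) (by linarith)
      exact (div_pos_of_neg_of_neg (by linarith) (by linarith)).le
  have hmuIoc : ∀ m : ℕ, thalerMu γ (Set.Ioc xs (y m))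
      = ENNReal.ofReal (((1 + x m)^(1-γ) - 1)/(1-γ)) := by
    intro m
    rw [thalerMu_Ioc hγ0 hγ1 hxs0 (hys m).le (hy1 m)]
    congr 1
    have hgy := thalerG_rpow hγ0 hγ1 (hxs0.trans (hys m)) (hy1 m)
    rw [hyg m] at hgy
    have e2 : Hfun γ xs = 2/(1-γ) := by rw [Hfun, hxseq]
    rw [Hfun, e2]
    have e3 : (y m)^(1-γ) + (1 + y m)^(1-γ) = (1 + x m)^(1-γ) + 1 := by linarith [hgy]
    rw [e3]
    ring
  -- limits
  have hzero := xseq_tendsto_zero hγ0 hγ1 hxs0 hxs1 hx0 hxpos hx1 hxlt hxg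
  have hzero' : Tendsto x atTop (𝓝[>] 0) :=
    tendsto_nhdsWithin_iff.2 ⟨hzero, Eventually.of_forall hxpos⟩
  have hsubT : Tendsto (fun n : ℕ => n - 1) atTop atTop := tendsto_sub_atTop_nat 1
  have hxm : Tendsto (fun n : ℕ => x (n-1)) atTop (𝓝[>] 0) := hzero'.comp hsubT
  have hAx : Tendsto (fun n : ℕ => ((1 + x (n-1))^(1-γ) - 1)/(x (n-1))) atTop (𝓝 (1-γ)) :=
    (tendsto_slopeA hγ0 hγ1).comp hxm
  have hR := xseq_rpow_tendsto hγ0 hγ1 hxs0 hxs1 hx0 hxpos hx1 hxlt hxg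
  have hRm : Tendsto (fun n : ℕ => ((n-1 : ℕ):ℝ)^(1/γ) * x (n-1)) atTop
      (𝓝 ((1/γ)^(1/γ))) := hR.comp hsubT
  have hone : Tendsto (fun m : ℕ => 1 + 1/(m:ℝ)) atTop (𝓝 1) := by
    have := (tendsto_const_nhds (x := (1:ℝ)) (f := atTop)).add
      tendsto_one_div_atTop_nhds_zero_nat
    simpa using this
  have hbase : Tendsto (fun n : ℕ => (n:ℝ)/((n-1:ℕ):ℝ)) atTop (𝓝 1) := by
    refine (hone.comp hsubT).congr' ?_
    filter_upwards [eventually_ge_atTop 2] with n hn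
    have h1 : (1:ℕ) ≤ n := by omega
    have hm : ((n-1:ℕ):ℝ) = (n:ℝ) - 1 := by
      rw [Nat.cast_sub h1]; norm_num
    have hn2 : (2:ℝ) ≤ (n:ℝ) := by exact_mod_cast hn
    simp only [Function.comp_apply]
    rw [hm]
    have hmne : (↑n:ℝ) - 1 ≠ 0 := by linarith
    rw [eq_div_iff hmne]
    field_simp; ring
  have hrat : Tendsto (fun n : ℕ => ((n:ℝ)/((n-1:ℕ):ℝ))^(1/γ)) atTop (𝓝 1) := by
    have hc : ContinuousAt (fun z : ℝ => z^(1/γ)) 1 :=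
      Real.continuousAt_rpow_const 1 _ (Or.inl one_ne_zero)
    have := hc.tendsto.comp hbase
    simpa [Real.one_rpow, Function.comp_def] using this
  have hnx : Tendsto (fun n : ℕ => (n:ℝ)^(1/γ) * x (n-1)) atTop (𝓝 ((1/γ)^(1/γ))) := by
    have hmul := hrat.mul hRm
    rw [one_mul] at hmul
    refine hmul.congr' ?_
    filter_upwards [eventually_ge_atTop 2] with n hn
    have h1 : (1:ℕ) ≤ n := by omega
    have hm : ((n-1:ℕ):ℝ) = (n:ℝ) - 1 := by
      rw [Nat.cast_sub h1]; norm_num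
    have hn2 : (2:ℝ) ≤ (n:ℝ) := by exact_mod_cast hn
    have hmpos : (0:ℝ) < ((n-1:ℕ):ℝ) := by rw [hm]; linarith
    have hnpos : (0:ℝ) < (n:ℝ) := by linarith
    rw [Real.div_rpow hnpos.le hmpos.le]
    have hme : ((n-1:ℕ):ℝ)^(1/γ) ≠ 0 := (Real.rpow_pos_of_pos hmpos _).ne'
    rw [div_mul_eq_mul_div, mul_comm (((n-1:ℕ):ℝ)^(1/γ)), ← mul_assoc, mul_div_assoc,
      div_self hme, mul_one]
  have hP : Tendsto (fun n : ℕ => ((n:ℝ)^(1/γ) * x (n-1)) *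
      (((1 + x (n-1))^(1-γ) - 1)/(x (n-1)))) atTop (𝓝 ((1/γ)^(1/γ) * (1-γ))) :=
    hnx.mul hAx
  have hfinal : Tendsto (fun n : ℕ => (n:ℝ)^(1/γ) *
      (((1 + x (n-1))^(1-γ) - 1)/(1-γ) / ((2^(1-γ)-1)/(1-γ)))) atTop
      (𝓝 ((1/γ)^(1/γ) * ((1-γ)/(2^(1-γ)-1)))) := by
    have hdiv := hP.div_const ((2:ℝ)^(1-γ) - 1)
    have hval : (1/γ)^(1/γ) * (1-γ) / (2^(1-γ)-1)
        = (1/γ)^(1/γ) * ((1-γ)/(2^(1-γ)-1)) := by ring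
    rw [hval] at hdiv
    refine hdiv.congr' ?_
    filter_upwards [eventually_ge_atTop 1] with n hn
    have hxp : x (n-1) ≠ 0 := (hxpos _).ne'
    field_simp
  refine hfinal.congr' ?_
  filter_upwards [eventually_ge_atTop 1] with n hn
  have hset := tau_set_eq hγ0 hγ1 hxs0 hxs1 hxseq hx0 hxpos hx1 hxlt hxg hys hy1 hyg
    (n := n) hn
  rw [hset]
  rw [thalerMuY, Measure.smul_apply, Measure.restrict_apply measurableSet_Ioc]
  have hint : Set.Ioc xs (y (n-1)) ∩ Set.Ioc xs 1 = Set.Ioc xs (y (n-1)) :=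
    inter_eq_left.2 (Ioc_subset_Ioc le_rfl (hy1 _))
  rw [hint, hmuY, hmuIoc, smul_eq_mul, ENNReal.toReal_mul, ENNReal.toReal_inv,
    ENNReal.toReal_ofReal hCY.le, ENNReal.toReal_ofReal (hWnn _)]
  ring
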